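/- Let μ be a fuzzy set of an MTL-algebra L and let 0 < α < β ≤ 1. Then for every t ∈ (α, β] the ∈-level set F(t) = {x ∈ L : μ(x) ≥ t} is either empty or a filter of L if and only if μ is a fuzzy filter with thresholds (α, β] of L. -/

import Mathlib

/-- An MTL-algebra: a bounded lattice with `⊥ ≠ ⊤`, a product `odot` and residuum `rimp`,
where `odot` is associative, commutative and monotone in each argument, `⊤` is a unit,
the Galois correspondence holds and prelinearity holds. -/
class MTL (L : Type*) extends Lattice L, BoundedOrder L where
  odot : L → L → L
  rimp : L → L → L
  bot_ne_top : (⊥ : L) ≠ ⊤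
  odot_assoc : ∀ x y z : L, odot (odot x y) z = odot x (odot y z)
  odot_comm : ∀ x y : L, odot x y = odot y x
  odot_mono_left : ∀ x y z : L, x ≤ y → odot x z ≤ odot y z
  odot_mono_right : ∀ x y z : L, x ≤ y → odot z x ≤ odot z y
  odot_top : ∀ x : L, odot x ⊤ = x
  galois : ∀ x y z : L, odot x y ≤ z ↔ x ≤ rimp y z
  prelinear : ∀ x y : L, rimp x y ⊔ rimp y x = ⊤

open MTL

variable {L : Type*} [MTL L]

/-- A subset `A` is a filter: `1 ∈ A` and it is closed under modus ponens. -/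
def IsFilter' (A : Set L) : Prop :=
  (⊤ : L) ∈ A ∧ ∀ x y : L, x ∈ A → rimp x y ∈ A → y ∈ A

/-- A fuzzy filter with thresholds `(α, β]`: `max(μ(1), α) ≥ min(μ(x), β)` and
`max(μ(y), α) ≥ min(μ(x → y), μ(x), β)`. -/
def IsThresholdFuzzyFilter (μ : L → ℝ) (α β : ℝ) : Prop :=
  (∀ x : L, max (μ ⊤) α ≥ min (μ x) β) ∧
    ∀ x y : L, max (μ y) α ≥ min (min (μ (rimp x y)) (μ x)) β

/-! Both conditions of a fuzzy filter with thresholds `(α, β]` have the form `min(r, β) ≤ max(s, α)`,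
which holds iff every `t ∈ (α, β]` with `t ≤ r` satisfies `t ≤ s`. Read through the level sets
`F(t)`, the two conditions become the two filter axioms for the nonempty `F(t)`. -/

theorem min_le_max_iff_forall_Ioc {γ : Type*} [LinearOrder γ] {r s a b : γ} :
    min r b ≤ max s a ↔ ∀ t, a < t → t ≤ b → t ≤ r → t ≤ s := by
  constructor
  · intro h t hat htb htr
    have ht : t ≤ max s a := (le_min htr htb).trans h
    exact (le_max_iff.mp ht).resolve_right hat.not_ge
  · intro h
    by_contra! hlt
    have hat : a < min r b := (le_max_right s a).trans_lt hlt
    have hs := h _ hat (min_le_right r b) (min_le_left r b)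
    exact (hs.trans (le_max_left s a)).not_gt hlt

theorem eq_empty_or_isFilter'_iff (A : Set L) :
    A = ∅ ∨ IsFilter' A ↔ (∀ x ∈ A, ⊤ ∈ A) ∧ ∀ x y : L, x ∈ A → rimp x y ∈ A → y ∈ A := by
  rcases A.eq_empty_or_nonempty with rfl | ⟨a, ha⟩
  · simp
  · simp only [IsFilter', A.nonempty_iff_ne_empty.mp ⟨a, ha⟩, false_or]
    exact ⟨fun h => ⟨fun _ _ => h.1, h.2⟩, fun h => ⟨h.1 a ha, h.2⟩⟩

theorem stmt_6_general (μ : L → ℝ) (α β : ℝ) :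
    (∀ t : ℝ, α < t → t ≤ β → ({x : L | t ≤ μ x} = ∅ ∨ IsFilter' {x : L | t ≤ μ x})) ↔ IsThresholdFuzzyFilter μ α β := by
  simp only [eq_empty_or_isFilter'_iff, IsThresholdFuzzyFilter, ge_iff_le, min_le_max_iff_forall_Ioc,
    le_min_iff, Set.mem_ofPred_eq]
  constructor
  · intro h
    exact ⟨fun x t hαt htβ hx => (h t hαt htβ).1 x hx,
      fun x y t hαt htβ hxy => (h t hαt htβ).2 x y hxy.2 hxy.1⟩
  · intro h t hαt htβ
    exact ⟨fun x hx => h.1 x t hαt htβ hx, fun x y hx hxy => h.2 x y t hαt htβ ⟨hxy, hx⟩⟩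

theorem stmt_6 (μ : L → ℝ) (hμ0 : ∀ x : L, 0 ≤ μ x) (hμ1 : ∀ x : L, μ x ≤ 1) (α β : ℝ) (hα : 0 < α) (hαβ : α < β) (hβ : β ≤ 1) :
    (∀ t : ℝ, α < t → t ≤ β → ({x : L | t ≤ μ x} = ∅ ∨ IsFilter' {x : L | t ≤ μ x})) ↔ IsThresholdFuzzyFilter μ α β :=
  stmt_6_general μ α β
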